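/- Under the default-logic merging construction, the merged theory T skeptically entails a formula φ not containing x or p if and only if both ⟨D|_{x=true}, ∅⟩ and ⟨D|_{x=false}, ∅⟩ skeptically entail φ. -/
import Mathlib


/-- Propositional formulas over variables indexed by `Nat`. -/
inductive Fm where
  | var : Nat → Fm
  | tru : Fm
  | fls : Fm
  | neg : Fm → Fm
  | conj : Fm → Fm → Fm
  | disj : Fm → Fm → Fm
deriving DecidableEq

/-- Evaluation of a formula under an assignment. -/
def Fm.eval (σ : Nat → Bool) : Fm → Bool
  | .var n => σ n
  | .tru => true
  | .fls => false
  | .neg F => !(F.eval σ)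
  | .conj F G => F.eval σ && G.eval σ
  | .disj F G => F.eval σ || G.eval σ

/-- `F.subst x v` replaces every occurrence of variable `x` by the constant `v`. -/
def Fm.subst (x : Nat) (v : Bool) : Fm → Fm
  | .var n => if n = x then (if v then .tru else .fls) else .var n
  | .tru => .tru
  | .fls => .fls
  | .neg F => .neg (F.subst x v)
  | .conj F G => .conj (F.subst x v) (G.subst x v)
  | .disj F G => .disj (F.subst x v) (G.subst x v)

/-- `F.occurs x` : variable `x` occurs in `F`. -/
def Fm.occurs (x : Nat) : Fm → Prop
  | .var n => n = x
  | .tru => False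
  | .fls => False
  | .neg F => F.occurs x
  | .conj F G => F.occurs x ∨ G.occurs x
  | .disj F G => F.occurs x ∨ G.occurs x

/-- Propositional entailment from a set of formulas. -/
def Entails (S : Set Fm) (f : Fm) : Prop :=
  ∀ σ : Nat → Bool, (∀ g ∈ S, g.eval σ = true) → f.eval σ = true

/-- Deductive closure. -/
def Th (S : Set Fm) : Set Fm := {f | Entails S f}

/-- A default `α : β / γ` with precondition `α`, justification `β`, consequence `γ`. -/
structure Default where
  pre : Fm
  jus : Fm
  con : Fm

/-- `G` is closed for the Reiter operator relative to candidate extension `E`: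
it contains `W`, is deductively closed, and applies every default of `D` whose
precondition is in `G` and whose justification is consistent with `E`. -/
def DLClosed (D : Set Default) (W : Set Fm) (E : Set Fm) (G : Set Fm) : Prop :=
  W ⊆ G ∧ (∀ f, Entails G f → f ∈ G) ∧
    ∀ d ∈ D, d.pre ∈ G → (Fm.neg d.jus) ∉ E → d.con ∈ G

/-- Reiter extension: `E` is the least set closed for the operator relative to `E` itself. -/
def IsExtension (D : Set Default) (W : Set Fm) (E : Set Fm) : Prop :=
  E = ⋂₀ {G | DLClosed D W E G}

/-- Skeptical entailment: `φ` belongs to every extension. -/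
def Skeptical (D : Set Default) (W : Set Fm) (φ : Fm) : Prop :=
  ∀ E, IsExtension D W E → φ ∈ E

/-- Substitution applied throughout a default. -/
def Default.subst (x : Nat) (v : Bool) (d : Default) : Default :=
  ⟨d.pre.subst x v, d.jus.subst x v, d.con.subst x v⟩

/-- `x` occurs in a default. -/
def Default.occurs (x : Nat) (d : Default) : Prop :=
  d.pre.occurs x ∨ d.jus.occurs x ∨ d.con.occurs x

/-- The merged default theory of the raising construction:
`{(: x∧p / x∧p), (: ¬x∧p / ¬x∧p)} ∪ {(p∧α : β / γ) | (α:β/γ) ∈ D}`. -/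
def mergedD (D : Set Default) (x p : Nat) : Set Default :=
  {⟨.tru, .conj (.var x) (.var p), .conj (.var x) (.var p)⟩,
   ⟨.tru, .conj (.neg (.var x)) (.var p), .conj (.neg (.var x)) (.var p)⟩} ∪
  (fun d => Default.mk (.conj (.var p) d.pre) d.jus d.con) '' D

section Basics

lemma Fm.eval_congr {σ σ' : Nat → Bool} (f : Fm) (h : ∀ n, f.occurs n → σ n = σ' n) :
    f.eval σ = f.eval σ' := by
  induction f with
  | var n => exact h n rfl
  | tru => rfl
  | fls => rfl
  | neg f ih => simp only [Fm.eval]; rw [ih h]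
  | conj f g ihf ihg =>
      simp only [Fm.eval]
      rw [ihf (fun n hn => h n (Or.inl hn)), ihg (fun n hn => h n (Or.inr hn))]
  | disj f g ihf ihg =>
      simp only [Fm.eval]
      rw [ihf (fun n hn => h n (Or.inl hn)), ihg (fun n hn => h n (Or.inr hn))]

lemma Fm.eval_subst (x : Nat) (v : Bool) (σ : Nat → Bool) (f : Fm) :
    (f.subst x v).eval σ = f.eval (Function.update σ x v) := by
  induction f with
  | var n =>
      by_cases h : n = x
      · subst h
        simp only [Fm.subst, if_pos rfl, Fm.eval, Function.update_self]
        cases v <;> rfl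
      · simp [Fm.subst, h, Fm.eval, Function.update_of_ne h]
  | tru => rfl
  | fls => rfl
  | neg f ih => simp only [Fm.subst, Fm.eval, ih]
  | conj f g ihf ihg => simp only [Fm.subst, Fm.eval, ihf, ihg]
  | disj f g ihf ihg => simp only [Fm.subst, Fm.eval, ihf, ihg]

lemma Fm.not_occurs_subst_self (x : Nat) (v : Bool) (f : Fm) :
    ¬ (f.subst x v).occurs x := by
  induction f with
  | var n =>
      by_cases h : n = x
      · subst h; simp only [Fm.subst, if_pos rfl]
        cases v <;> simp [Fm.occurs]
      · simp [Fm.subst, h, Fm.occurs]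
  | tru => simp [Fm.subst, Fm.occurs]
  | fls => simp [Fm.subst, Fm.occurs]
  | neg f ih => simpa [Fm.subst, Fm.occurs] using ih
  | conj f g ihf ihg =>
      simp only [Fm.subst, Fm.occurs]
      exact fun h => h.elim ihf ihg
  | disj f g ihf ihg =>
      simp only [Fm.subst, Fm.occurs]
      exact fun h => h.elim ihf ihg

lemma Fm.occurs_subst_mono {x n : Nat} {v : Bool} {f : Fm}
    (h : (f.subst x v).occurs n) : f.occurs n := by
  induction f with
  | var m =>
      by_cases hm : m = x
      · subst hm
        simp only [Fm.subst, if_pos rfl] at h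
        cases v <;> simp [Fm.occurs] at h
      · simpa [Fm.subst, hm, Fm.occurs] using h
  | tru => simpa [Fm.subst, Fm.occurs] using h
  | fls => simpa [Fm.subst, Fm.occurs] using h
  | neg f ih => exact ih h
  | conj f g ihf ihg => exact h.elim (fun h => Or.inl (ihf h)) (fun h => Or.inr (ihg h))
  | disj f g ihf ihg => exact h.elim (fun h => Or.inl (ihf h)) (fun h => Or.inr (ihg h))

lemma Fm.subst_eq_of_not_occurs {x : Nat} {v : Bool} {f : Fm} (h : ¬ f.occurs x) :
    f.subst x v = f := by
  induction f with
  | var n =>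
      have : ¬ (n = x) := h
      simp [Fm.subst, this]
  | tru => rfl
  | fls => rfl
  | neg f ih => simp only [Fm.subst]; rw [ih h]
  | conj f g ihf ihg =>
      simp only [Fm.subst]
      rw [ihf (fun hh => h (Or.inl hh)), ihg (fun hh => h (Or.inr hh))]
  | disj f g ihf ihg =>
      simp only [Fm.subst]
      rw [ihf (fun hh => h (Or.inl hh)), ihg (fun hh => h (Or.inr hh))]

lemma Entails.mono {S T : Set Fm} {f : Fm} (hST : S ⊆ T) (h : Entails S f) : Entails T f :=
  fun σ hσ => h σ (fun g hg => hσ g (hST hg))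

lemma subset_Th (S : Set Fm) : S ⊆ Th S := fun f hf σ hσ => hσ f hf

lemma Th_entails {S : Set Fm} {f : Fm} (h : Entails (Th S) f) : Entails S f :=
  fun σ hσ => h σ (fun g hg => hg σ hσ)

lemma Th_subset_of_closed {S G : Set Fm} (hSG : S ⊆ G)
    (hG : ∀ f, Entails G f → f ∈ G) : Th S ⊆ G :=
  fun f hf => hG f (hf.mono hSG)

lemma entails_tru (S : Set Fm) : Entails S Fm.tru := fun _ _ => rfl

end Basics

section DL

/-- The least closed set relative to `E`. -/
def MOp (D : Set Default) (W E : Set Fm) : Set Fm := ⋂₀ {G | DLClosed D W E G}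

lemma DLClosed_MOp (D : Set Default) (W E : Set Fm) : DLClosed D W E (MOp D W E) := by
  refine ⟨?_, ?_, ?_⟩
  · intro f hf
    exact Set.mem_sInter.2 (fun G hG => hG.1 hf)
  · intro f hf
    refine Set.mem_sInter.2 (fun G hG => ?_)
    exact hG.2.1 f (hf.mono (Set.sInter_subset_of_mem hG))
  · intro d hd hpre hjus
    refine Set.mem_sInter.2 (fun G hG => ?_)
    exact hG.2.2 d hd (Set.mem_sInter.1 hpre G hG) hjus

lemma MOp_subset {D : Set Default} {W E G : Set Fm} (h : DLClosed D W E G) :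
    MOp D W E ⊆ G := Set.sInter_subset_of_mem h

lemma isExtension_iff {D : Set Default} {W E : Set Fm} :
    IsExtension D W E ↔ E = MOp D W E := Iff.rfl

lemma ext_closed {D : Set Default} {W E : Set Fm} (h : IsExtension D W E) :
    DLClosed D W E E := by
  rw [isExtension_iff] at h
  have hm := DLClosed_MOp D W E
  rwa [← h] at hm

/-- every extension with empty facts is satisfiable -/
lemma ext_consistent {D : Set Default} {E : Set Fm} (h : IsExtension D ∅ E) :
    ∃ σ : Nat → Bool, ∀ g ∈ E, g.eval σ = true := by
  by_contra hcon
  push_neg at hcon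
  have hded := (ext_closed h).2.1
  have hfls : Fm.fls ∈ E := by
    refine hded _ (fun σ hσ => ?_)
    obtain ⟨g, hg, hg'⟩ := hcon σ
    exact absurd (hσ g hg) hg'
  have huniv : ∀ f, f ∈ E := by
    intro f
    refine hded _ (fun σ hσ => ?_)
    have := hσ _ hfls
    simp [Fm.eval] at this
  -- then `Th ∅` is closed relative to E, so E ⊆ Th ∅, contradiction with fls ∈ E
  have hclosed : DLClosed D ∅ E (Th ∅) := by
    refine ⟨by simp, fun f hf => Th_entails hf, ?_⟩
    intro d _ _ hjus
    exact absurd (huniv _) hjus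
  have hsub : E ⊆ Th ∅ := by
    rw [isExtension_iff] at h
    rw [h]
    exact MOp_subset hclosed
  have : Fm.fls ∈ Th ∅ := hsub hfls
  have := this (fun _ => true) (by simp)
  simp [Fm.eval] at this

end DL
section Transfer

variable {x p : Nat}

/-- the literal conjunction `(±x) ∧ p`. -/
def cFm (x p : Nat) (v : Bool) : Fm :=
  .conj (if v then .var x else .neg (.var x)) (.var p)

lemma cFm_eval {σ : Nat → Bool} {v : Bool} (h : (cFm x p v).eval σ = true) :
    σ x = v ∧ σ p = true := by
  cases v <;> simp [cFm, Fm.eval] at h <;> exact h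

lemma cFm_eval_of {σ : Nat → Bool} {v : Bool} (hx : σ x = v) (hpp : σ p = true) :
    (cFm x p v).eval σ = true := by
  cases v <;> simp [cFm, Fm.eval, hx, hpp]

/-- the updated assignment making `cFm v` true. -/
def upd2 (x p : Nat) (v : Bool) (σ : Nat → Bool) : Nat → Bool :=
  Function.update (Function.update σ x v) p true

lemma upd2_x (hxp : x ≠ p) (v : Bool) (σ : Nat → Bool) : upd2 x p v σ x = v := by
  simp [upd2, Function.update_of_ne hxp]

lemma upd2_p (v : Bool) (σ : Nat → Bool) : upd2 x p v σ p = true := by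
  simp [upd2]

lemma upd2_other {n : Nat} (hnx : n ≠ x) (hnp : n ≠ p) (v : Bool) (σ : Nat → Bool) :
    upd2 x p v σ n = σ n := by
  simp [upd2, Function.update_of_ne hnp, Function.update_of_ne hnx]

lemma eval_upd2_of_xpfree {f : Fm} (hfx : ¬ f.occurs x) (hfp : ¬ f.occurs p)
    (v : Bool) (σ : Nat → Bool) : f.eval (upd2 x p v σ) = f.eval σ := by
  refine Fm.eval_congr f (fun n hn => ?_)
  have hnx : n ≠ x := fun h => hfx (by rwa [h] at hn)
  have hnp : n ≠ p := fun h => hfp (by rwa [h] at hn)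
  exact upd2_other hnx hnp v σ

lemma eval_upd2_of_pfree (hxp : x ≠ p) {f : Fm} (hfp : ¬ f.occurs p)
    (v : Bool) (σ : Nat → Bool) : f.eval (upd2 x p v σ) = f.eval (Function.update σ x v) := by
  refine Fm.eval_congr f (fun n hn => ?_)
  have hnp : n ≠ p := fun h => hfp (by rwa [h] at hn)
  simp [upd2, Function.update_of_ne hnp]

/-- Key transfer lemma: over an `x,p`-free base `S`, entailment from `S ∪ {cFm v}`
of a `p`-free formula `f` is the same as entailment from `S` of `f.subst x v`. -/
lemma transfer (hxp : x ≠ p) {S : Set Fm} (hS : ∀ g ∈ S, ¬ g.occurs x ∧ ¬ g.occurs p)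
    {v : Bool} {f : Fm} (hfp : ¬ f.occurs p) :
    Entails (insert (cFm x p v) S) f ↔ Entails S (f.subst x v) := by
  constructor
  · intro h σ hσ
    have hσ' : ∀ g ∈ insert (cFm x p v) S, g.eval (upd2 x p v σ) = true := by
      intro g hg
      rcases hg with hg | hg
      · subst hg; exact cFm_eval_of (upd2_x hxp v σ) (upd2_p v σ)
      · rw [eval_upd2_of_xpfree (hS g hg).1 (hS g hg).2]
        exact hσ g hg
    have := h _ hσ'
    rw [eval_upd2_of_pfree hxp hfp] at this
    rw [Fm.eval_subst]
    exact this
  · intro h σ hσ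
    have hc := cFm_eval (hσ _ (Set.mem_insert _ _))
    have hfs := h σ (fun g hg => hσ g (Set.mem_insert_of_mem _ hg))
    rw [Fm.eval_subst] at hfs
    rwa [← hc.1, Function.update_eq_self] at hfs

/-- for an `x`-satisfying context, entailing `f.subst x v` means entailing `f`. -/
lemma entails_of_entails_subst {G : Set Fm} {v : Bool} {f : Fm}
    (hc : cFm x p v ∈ G) (h : Entails G (f.subst x v)) : Entails G f := by
  intro σ hσ
  have hx := (cFm_eval (hσ _ hc)).1
  have := h σ hσ
  rw [Fm.eval_subst, ← hx, Function.update_eq_self] at this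
  exact this

lemma entails_subst_of_entails {G : Set Fm} {v : Bool} {f : Fm}
    (hc : cFm x p v ∈ G) (h : Entails G f) : Entails G (f.subst x v) := by
  intro σ hσ
  have hx := (cFm_eval (hσ _ hc)).1
  rw [Fm.eval_subst, ← hx, Function.update_eq_self]
  exact h σ hσ

lemma entails_p_conj {G : Set Fm} {v : Bool} {α : Fm} (hc : cFm x p v ∈ G) :
    Entails G (.conj (.var p) α) ↔ Entails G α := by
  constructor
  · intro h σ hσ
    have := h σ hσ
    simp only [Fm.eval, Bool.and_eq_true] at this
    exact this.2
  · intro h σ hσ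
    have hpp := (cFm_eval (hσ _ hc)).2
    simp only [Fm.eval, Bool.and_eq_true]
    exact ⟨hpp, h σ hσ⟩

/-- `cFm v` refutes `cFm (!v)`. -/
lemma entails_neg_cFm_not (hxp : x ≠ p) {G : Set Fm} {v : Bool} (hc : cFm x p v ∈ G) :
    Entails G (.neg (cFm x p (!v))) := by
  intro σ hσ
  have hx := (cFm_eval (hσ _ hc)).1
  simp only [Fm.eval, Bool.not_eq_true']
  cases v <;> simp [cFm, Fm.eval, hx]

end Transfer
section Claims

lemma mem_Th {S : Set Fm} {f : Fm} : f ∈ Th S ↔ Entails S f := Iff.rfl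

lemma seed_mem (D : Set Default) (x p : Nat) (w : Bool) :
    (⟨.tru, cFm x p w, cFm x p w⟩ : Default) ∈ mergedD D x p := by
  cases w
  · exact Set.mem_union_left _ (Set.mem_insert_of_mem _ rfl)
  · exact Set.mem_union_left _ (Set.mem_insert _ _)

lemma embed_mem {D : Set Default} (x p : Nat) {d₀ : Default} (hd₀ : d₀ ∈ D) :
    (⟨.conj (.var p) d₀.pre, d₀.jus, d₀.con⟩ : Default) ∈ mergedD D x p :=
  Set.mem_union_right _ ⟨d₀, hd₀, rfl⟩

lemma mem_mergedD {D : Set Default} {x p : Nat} {d : Default} (h : d ∈ mergedD D x p) :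
    d = ⟨.tru, cFm x p true, cFm x p true⟩ ∨
    d = ⟨.tru, cFm x p false, cFm x p false⟩ ∨
    ∃ d₀ ∈ D, d = ⟨.conj (.var p) d₀.pre, d₀.jus, d₀.con⟩ := by
  rcases h with h | h
  · rcases h with h | h
    · left; rw [h]; rfl
    · right; left; rw [h]; rfl
  · obtain ⟨d₀, hd₀, rfl⟩ := h
    exact Or.inr (Or.inr ⟨d₀, hd₀, rfl⟩)

lemma claimA {x p : Nat} (hxp : x ≠ p) (D : Set Default)
    (hp : ∀ d ∈ D, ¬ d.occurs p) (v : Bool) (F : Set Fm)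
    (hF : IsExtension ((Default.subst x v) '' D) ∅ F) :
    ∃ E, IsExtension (mergedD D x p) ∅ E ∧
      ∀ φ : Fm, ¬ φ.occurs x → ¬ φ.occurs p → (φ ∈ E ↔ φ ∈ F) := by
  obtain ⟨-, hFded, hFfire⟩ := ext_closed hF
  set F₀ : Set Fm := {f | f ∈ F ∧ ¬ f.occurs x ∧ ¬ f.occurs p} with hF₀def
  have hF₀free : ∀ g ∈ F₀, ¬ g.occurs x ∧ ¬ g.occurs p := fun g hg => hg.2
  have hF₀sub : F₀ ⊆ F := fun g hg => hg.1
  have hThF₀ : Th F₀ ⊆ F := Th_subset_of_closed hF₀sub hFded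
  have hFTh : F ⊆ Th F₀ := by
    have hcl : DLClosed ((Default.subst x v) '' D) ∅ F (Th F₀) := by
      refine ⟨by simp, fun f hf => Th_entails hf, ?_⟩
      rintro d ⟨d₀, hd₀, rfl⟩ hpre hjus
      have hconF : (Default.subst x v d₀).con ∈ F :=
        hFfire _ ⟨d₀, hd₀, rfl⟩ (hThF₀ hpre) hjus
      have hpcon : ¬ d₀.con.occurs p := fun h => hp d₀ hd₀ (Or.inr (Or.inr h))
      refine subset_Th _ ⟨hconF, Fm.not_occurs_subst_self x v _, ?_⟩
      exact fun h => hpcon (Fm.occurs_subst_mono h)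
    rw [isExtension_iff] at hF
    rw [hF]
    exact MOp_subset hcl
  have hmemF : ∀ f, f ∈ F ↔ Entails F₀ f := fun f => ⟨fun h => hFTh h, fun h => hThF₀ h⟩
  set c : Fm := cFm x p v with hcdef
  set S : Set Fm := insert c F₀ with hSdef
  set E : Set Fm := Th S with hEdef
  have hcS : c ∈ S := Set.mem_insert _ _
  have hcE : c ∈ E := subset_Th _ hcS
  -- a satisfying assignment for S
  obtain ⟨σF, hσF⟩ := ext_consistent hF
  have hσ' : ∀ g ∈ S, g.eval (upd2 x p v σF) = true := by
    intro g hg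
    rcases hg with hg | hg
    · rw [hg]; exact cFm_eval_of (upd2_x hxp v σF) (upd2_p v σF)
    · rw [eval_upd2_of_xpfree (hF₀free g hg).1 (hF₀free g hg).2]
      exact hσF g (hF₀sub hg)
  have hnegc_notE : Fm.neg c ∉ E := by
    intro h
    have h2 := h _ hσ'
    have hc := hσ' c hcS
    change (!(c.eval (upd2 x p v σF))) = true at h2
    rw [hc] at h2
    exact absurd h2 (by simp)
  have hnegc'_E : Fm.neg (cFm x p (!v)) ∈ E :=
    mem_Th.2 (entails_neg_cFm_not hxp hcS)
  have htrans : ∀ f : Fm, ¬ f.occurs p → (f ∈ E ↔ (f.subst x v) ∈ F) := by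
    intro f hfp
    rw [mem_Th, hmemF]
    exact transfer hxp hF₀free hfp
  -- E is closed relative to itself
  have hEclosed : DLClosed (mergedD D x p) ∅ E E := by
    refine ⟨by simp, fun f hf => Th_entails hf, ?_⟩
    have hseed : ∀ w : Bool, Fm.neg (cFm x p w) ∉ E → cFm x p w ∈ E := by
      intro w hw
      rcases (by cases w <;> cases v <;> simp : w = v ∨ w = !v) with h | h
      · rw [h]; exact hcE
      · rw [h] at hw
        exact absurd hnegc'_E hw
    intro d hd hpre hjus
    rcases mem_mergedD hd with rfl | rfl | ⟨d₀, hd₀, rfl⟩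
    · exact hseed true hjus
    · exact hseed false hjus
    · -- embedded default
      have hαp : ¬ d₀.pre.occurs p := fun h => hp d₀ hd₀ (Or.inl h)
      have hβp : ¬ d₀.jus.occurs p := fun h => hp d₀ hd₀ (Or.inr (Or.inl h))
      have hγp : ¬ d₀.con.occurs p := fun h => hp d₀ hd₀ (Or.inr (Or.inr h))
      have hαE : Entails S d₀.pre := (entails_p_conj hcS).1 hpre
      have hαF : d₀.pre.subst x v ∈ F :=
        (hmemF _).2 ((transfer hxp hF₀free hαp).1 hαE)
      have hjusF : Fm.neg (d₀.jus.subst x v) ∉ F := by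
        intro h
        exact hjus ((htrans (Fm.neg d₀.jus) hβp).2 h)
      have hconF : d₀.con.subst x v ∈ F :=
        hFfire (Default.subst x v d₀) ⟨d₀, hd₀, rfl⟩ hαF hjusF
      exact (htrans d₀.con hγp).2 hconF
  refine ⟨E, ?_, ?_⟩
  · rw [isExtension_iff]
    refine Set.Subset.antisymm ?_ (MOp_subset hEclosed)
    set M : Set Fm := MOp (mergedD D x p) ∅ E with hMdef
    have hM := DLClosed_MOp (mergedD D x p) ∅ E
    have htruM : Fm.tru ∈ M := hM.2.1 _ (entails_tru M)
    have hcM : c ∈ M :=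
      hM.2.2 ⟨.tru, cFm x p v, cFm x p v⟩ (seed_mem D x p v) htruM hnegc_notE
    have hFM : F ⊆ M := by
      have hcl : DLClosed ((Default.subst x v) '' D) ∅ F M := by
        refine ⟨by simp, hM.2.1, ?_⟩
        rintro d ⟨d₀, hd₀, rfl⟩ hpreM hjusF
        have hβp : ¬ d₀.jus.occurs p := fun h => hp d₀ hd₀ (Or.inr (Or.inl h))
        have hαM : Entails M d₀.pre :=
          entails_of_entails_subst hcM (fun σ hσ => hσ _ hpreM)
        have hpreM' : Fm.conj (.var p) d₀.pre ∈ M :=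
          hM.2.1 _ ((entails_p_conj hcM).2 hαM)
        have hjusE : Fm.neg d₀.jus ∉ E := by
          intro h
          exact hjusF ((htrans (Fm.neg d₀.jus) hβp).1 h)
        have hconM : d₀.con ∈ M :=
          hM.2.2 ⟨.conj (.var p) d₀.pre, d₀.jus, d₀.con⟩ (embed_mem x p hd₀) hpreM' hjusE
        exact hM.2.1 _ (entails_subst_of_entails hcM (fun σ hσ => hσ _ hconM))
      rw [isExtension_iff] at hF
      rw [hF]
      exact MOp_subset hcl
    have hSM : S ⊆ M := by
      intro g hg
      rcases hg with hg | hg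
      · rw [hg]; exact hcM
      · exact hFM (hF₀sub hg)
    exact Th_subset_of_closed hSM hM.2.1
  · intro φ hφx hφp
    rw [htrans φ hφp, Fm.subst_eq_of_not_occurs hφx]

end Claims
section ClaimB

lemma claimB {x p : Nat} (hxp : x ≠ p) (D : Set Default)
    (hp : ∀ d ∈ D, ¬ d.occurs p) (E : Set Fm)
    (hE : IsExtension (mergedD D x p) ∅ E) :
    ∃ (v : Bool) (F : Set Fm), IsExtension ((Default.subst x v) '' D) ∅ F ∧
      ∀ φ : Fm, ¬ φ.occurs x → ¬ φ.occurs p → (φ ∈ E ↔ φ ∈ F) := by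
  obtain ⟨-, hEded, hEfire⟩ := ext_closed hE
  obtain ⟨σE, hσE⟩ := ext_consistent hE
  have htruE : Fm.tru ∈ E := hEded _ (entails_tru E)
  -- not both seed justifications are consistent with E
  have hnot_both_free : ¬ (Fm.neg (cFm x p true) ∉ E ∧ Fm.neg (cFm x p false) ∉ E) := by
    rintro ⟨h1, h2⟩
    have hc1 : cFm x p true ∈ E :=
      hEfire ⟨.tru, cFm x p true, cFm x p true⟩ (seed_mem D x p true) htruE h1
    have hc2 : cFm x p false ∈ E :=
      hEfire ⟨.tru, cFm x p false, cFm x p false⟩ (seed_mem D x p false) htruE h2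
    have e1 := (cFm_eval (hσE _ hc1)).1
    have e2 := (cFm_eval (hσE _ hc2)).1
    rw [e1] at e2
    simp at e2
  -- not both are blocked
  have hnot_both_in : ¬ (Fm.neg (cFm x p true) ∈ E ∧ Fm.neg (cFm x p false) ∈ E) := by
    rintro ⟨h1, h2⟩
    have hcl : DLClosed (mergedD D x p) ∅ E (Th ∅) := by
      refine ⟨by simp, fun f hf => Th_entails hf, ?_⟩
      intro d hd hpre hjus
      rcases mem_mergedD hd with rfl | rfl | ⟨d₀, hd₀, rfl⟩
      · exact absurd h1 hjus
      · exact absurd h2 hjus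
      · exfalso
        have := hpre (fun _ => false) (by simp)
        simp [Fm.eval] at this
    have hsub : E ⊆ Th ∅ := by
      rw [isExtension_iff] at hE
      rw [hE]
      exact MOp_subset hcl
    have := hsub h1 (fun _ => true) (by simp)
    simp [Fm.eval, cFm] at this
  -- pick the unblocked side
  obtain ⟨v, hnegv, hnegv'⟩ :
      ∃ v : Bool, Fm.neg (cFm x p v) ∉ E ∧ Fm.neg (cFm x p (!v)) ∈ E := by
    by_cases h1 : Fm.neg (cFm x p true) ∈ E
    · by_cases h2 : Fm.neg (cFm x p false) ∈ E
      · exact absurd ⟨h1, h2⟩ hnot_both_in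
      · exact ⟨false, h2, by simpa using h1⟩
    · refine ⟨true, h1, ?_⟩
      by_cases h2 : Fm.neg (cFm x p false) ∈ E
      · simpa using h2
      · exact absurd ⟨h1, h2⟩ hnot_both_free
  have hcE : cFm x p v ∈ E :=
    hEfire ⟨.tru, cFm x p v, cFm x p v⟩ (seed_mem D x p v) htruE hnegv
  set E₀ : Set Fm := {f | f ∈ E ∧ ¬ f.occurs x ∧ ¬ f.occurs p} with hE₀def
  have hE₀free : ∀ g ∈ E₀, ¬ g.occurs x ∧ ¬ g.occurs p := fun g hg => hg.2
  have hE₀sub : E₀ ⊆ E := fun g hg => hg.1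
  have hstar : ∀ f ∈ E, ¬ f.occurs p → f.subst x v ∈ E₀ := by
    intro f hf hfp
    refine ⟨hEded _ (entails_subst_of_entails hcE (fun σ hσ => hσ f hf)),
      Fm.not_occurs_subst_self x v f, fun h => hfp (Fm.occurs_subst_mono h)⟩
  set S : Set Fm := insert (cFm x p v) E₀ with hSdef
  have hcS : cFm x p v ∈ S := Set.mem_insert _ _
  have hThSE : Th S ⊆ E := by
    refine Th_subset_of_closed ?_ hEded
    intro g hg
    rcases hg with hg | hg
    · rw [hg]; exact hcE
    · exact hE₀sub hg
  have hETh : E ⊆ Th S := by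
    have hcl : DLClosed (mergedD D x p) ∅ E (Th S) := by
      refine ⟨by simp, fun f hf => Th_entails hf, ?_⟩
      have hseed : ∀ w : Bool, Fm.neg (cFm x p w) ∉ E → cFm x p w ∈ Th S := by
        intro w hw
        rcases (by cases w <;> cases v <;> simp : w = v ∨ w = !v) with h | h
        · rw [h]; exact subset_Th _ hcS
        · rw [h] at hw
          exact absurd hnegv' hw
      intro d hd hpre hjus
      rcases mem_mergedD hd with rfl | rfl | ⟨d₀, hd₀, rfl⟩
      · exact hseed true hjus
      · exact hseed false hjus
      · have hγp : ¬ d₀.con.occurs p := fun h => hp d₀ hd₀ (Or.inr (Or.inr h))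
        have hγE : d₀.con ∈ E :=
          hEfire ⟨.conj (.var p) d₀.pre, d₀.jus, d₀.con⟩ (embed_mem x p hd₀)
            (hThSE hpre) hjus
        have hγ₀ : d₀.con.subst x v ∈ E₀ := hstar _ hγE hγp
        exact mem_Th.2 (entails_of_entails_subst hcS
          (fun σ hσ => hσ _ (Set.mem_insert_of_mem _ hγ₀)))
    rw [isExtension_iff] at hE
    rw [hE]
    exact MOp_subset hcl
  have hmemE : ∀ f, f ∈ E ↔ Entails S f := fun f => ⟨fun h => hETh h, fun h => hThSE h⟩
  set F : Set Fm := Th E₀ with hFdef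
  have htrans : ∀ f : Fm, ¬ f.occurs p → (f ∈ E ↔ (f.subst x v) ∈ F) := by
    intro f hfp
    rw [hmemE, mem_Th]
    exact transfer hxp hE₀free hfp
  have hFclosed : DLClosed ((Default.subst x v) '' D) ∅ F F := by
    refine ⟨by simp, fun f hf => Th_entails hf, ?_⟩
    rintro d ⟨d₀, hd₀, rfl⟩ hpreF hjusF
    have hβp : ¬ d₀.jus.occurs p := fun h => hp d₀ hd₀ (Or.inr (Or.inl h))
    have hγp : ¬ d₀.con.occurs p := fun h => hp d₀ hd₀ (Or.inr (Or.inr h))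
    have hαS : Entails S d₀.pre :=
      entails_of_entails_subst hcS
        ((mem_Th.1 hpreF).mono (Set.subset_insert _ _))
    have hpreE : Fm.conj (.var p) d₀.pre ∈ E :=
      (hmemE _).2 ((entails_p_conj hcS).2 hαS)
    have hjusE : Fm.neg d₀.jus ∉ E := fun h => hjusF ((htrans (Fm.neg d₀.jus) hβp).1 h)
    have hγE : d₀.con ∈ E :=
      hEfire ⟨.conj (.var p) d₀.pre, d₀.jus, d₀.con⟩ (embed_mem x p hd₀) hpreE hjusE
    exact subset_Th _ (hstar _ hγE hγp)
  have hFsub : ∀ G : Set Fm, DLClosed ((Default.subst x v) '' D) ∅ F G → F ⊆ G := by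
    intro G hG
    set G₀ : Set Fm := {f | f ∈ G ∧ ¬ f.occurs x ∧ ¬ f.occurs p} with hG₀def
    have hG₀free : ∀ g ∈ G₀, ¬ g.occurs x ∧ ¬ g.occurs p := fun g hg => hg.2
    have hG₀sub : G₀ ⊆ G := fun g hg => hg.1
    set K : Set Fm := Th (insert (cFm x p v) G₀) with hKdef
    have hcK : cFm x p v ∈ insert (cFm x p v) G₀ := Set.mem_insert _ _
    have hKclosed : DLClosed (mergedD D x p) ∅ E K := by
      refine ⟨by simp, fun f hf => Th_entails hf, ?_⟩
      have hseed : ∀ w : Bool, Fm.neg (cFm x p w) ∉ E → cFm x p w ∈ K := by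
        intro w hw
        rcases (by cases w <;> cases v <;> simp : w = v ∨ w = !v) with h | h
        · rw [h]; exact subset_Th _ hcK
        · rw [h] at hw
          exact absurd hnegv' hw
      intro d hd hpre hjus
      rcases mem_mergedD hd with rfl | rfl | ⟨d₀, hd₀, rfl⟩
      · exact hseed true hjus
      · exact hseed false hjus
      · have hαp : ¬ d₀.pre.occurs p := fun h => hp d₀ hd₀ (Or.inl h)
        have hβp : ¬ d₀.jus.occurs p := fun h => hp d₀ hd₀ (Or.inr (Or.inl h))
        have hγp : ¬ d₀.con.occurs p := fun h => hp d₀ hd₀ (Or.inr (Or.inr h))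
        have hαK : Entails (insert (cFm x p v) G₀) d₀.pre :=
          (entails_p_conj hcK).1 (mem_Th.1 hpre)
        have hαG : d₀.pre.subst x v ∈ G :=
          hG.2.1 _ (((transfer hxp hG₀free hαp).1 hαK).mono hG₀sub)
        have hjusF : Fm.neg (d₀.jus.subst x v) ∉ F :=
          fun h => hjus ((htrans (Fm.neg d₀.jus) hβp).2 h)
        have hγG : d₀.con.subst x v ∈ G :=
          hG.2.2 (Default.subst x v d₀) ⟨d₀, hd₀, rfl⟩ hαG hjusF
        have hγG₀ : d₀.con.subst x v ∈ G₀ :=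
          ⟨hγG, Fm.not_occurs_subst_self x v _, fun h => hγp (Fm.occurs_subst_mono h)⟩
        exact mem_Th.2 (entails_of_entails_subst hcK
          (fun σ hσ => hσ _ (Set.mem_insert_of_mem _ hγG₀)))
    have hEK : E ⊆ K := by
      rw [isExtension_iff] at hE
      rw [hE]
      exact MOp_subset hKclosed
    have hE₀G : E₀ ⊆ G := by
      intro f hf
      have hfK : f ∈ K := hEK (hE₀sub hf)
      have := (transfer hxp hG₀free (hE₀free f hf).2).1 (mem_Th.1 hfK)
      rw [Fm.subst_eq_of_not_occurs (hE₀free f hf).1] at this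
      exact hG.2.1 _ (this.mono hG₀sub)
    exact Th_subset_of_closed hE₀G hG.2.1
  refine ⟨v, F, ?_, ?_⟩
  · rw [isExtension_iff]
    refine Set.Subset.antisymm ?_ (MOp_subset hFclosed)
    intro f hf
    exact Set.mem_sInter.2 (fun G hG => hFsub G hG hf)
  · intro φ hφx hφp
    rw [htrans φ hφp, Fm.subst_eq_of_not_occurs hφx]

end ClaimB
/-- the merged theory skeptically entails a formula `φ` not
containing `x` or `p` iff both substituted theories skeptically entail `φ`. -/
theorem default_merging_skeptical (D : Set Default) (x p : Nat) (hxp : x ≠ p)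
    (hp : ∀ d ∈ D, ¬ d.occurs p) (φ : Fm)
    (hφx : ¬ φ.occurs x) (hφp : ¬ φ.occurs p) :
    Skeptical (mergedD D x p) ∅ φ ↔
      (Skeptical ((Default.subst x true) '' D) ∅ φ ∧
       Skeptical ((Default.subst x false) '' D) ∅ φ) := by
  constructor
  · intro hsk
    constructor
    · intro F hF
      obtain ⟨E, hEext, hiff⟩ := claimA hxp D hp true F hF
      exact (hiff φ hφx hφp).1 (hsk E hEext)
    · intro F hF
      obtain ⟨E, hEext, hiff⟩ := claimA hxp D hp false F hF
      exact (hiff φ hφx hφp).1 (hsk E hEext)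
  · rintro ⟨h1, h2⟩ E hE
    obtain ⟨v, F, hFext, hiff⟩ := claimB hxp D hp E hE
    cases v
    · exact (hiff φ hφx hφp).2 (h2 F hFext)
    · exact (hiff φ hφx hφp).2 (h1 F hFext)
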